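/- Consider the random walk in the random environment 𝐏^expl on ℤ^d, d ≥ 2, with parameter ε ∈ (1/(2d+1), 1/5). Then: 𝐏^expl-a.s., P^ω_0[X_1·ℓ_0 = 1] = 1 − ε, where ℓ_0 = e_1 + ⋯ + e_d; consequently, ℙ-almost surely X_n·ℓ_0/n → 1−2ε, the walk is transient in the direction ℓ_0/|ℓ_0|, and condition (T) in the direction ℓ_0/|ℓ_0| holds. -/

import Mathlib

open MeasureTheory ProbabilityTheory Filter Topology ENNReal
open scoped Classical

noncomputable section

namespace RWRE

/-- Sites of `ℤ^d`. -/
abbrev V (d : ℕ) := Fin d → ℤ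

/-- The `2d` directions: `(i, true)` is `e_i`, `(i, false)` is `-e_i`. -/
abbrev Dir (d : ℕ) := Fin d × Bool

/-- Trajectory space. -/
abbrev Traj (d : ℕ) := ℕ → V d

/-- The unit vector associated to a direction. -/
def dirVec (d : ℕ) (e : Dir d) : V d := fun i => if i = e.1 then (if e.2 then 1 else -1) else 0

/-- Probability vectors on the set of directions. -/
abbrev ProbVec (d : ℕ) := {p : Dir d → ℝ // (∀ e, 0 ≤ p e) ∧ ∑ e, p e = 1}

/-- Environments. -/
abbrev Env (d : ℕ) := V d → ProbVec d

/-- Transition probability at site `x` in direction `e`. -/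
def pmf {d : ℕ} (ω : Env d) (x : V d) (e : Dir d) : ℝ := (ω x).1 e

/-- Transition probability from `x` to `y` (zero if `y` is not a neighbour of `x`). -/
def stepProb {d : ℕ} (ω : Env d) (x y : V d) : ℝ :=
  ∑ e : Dir d, if y = x + dirVec d e then pmf ω x e else 0

/-- `P` is the family of quenched laws: `P ω x` is the law of the Markov chain started at `x`
with transition probabilities given by `ω`. -/
def IsQuenched {d : ℕ} (P : Env d → V d → Measure (Traj d)) : Prop :=
  (∀ ω x, IsProbabilityMeasure (P ω x)) ∧
  (∀ x, Measurable fun ω => P ω x) ∧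
  ∀ ω x (n : ℕ) (γ : ℕ → V d),
    (P ω x {X | ∀ k ≤ n, X k = γ k}).toReal
      = (if γ 0 = x then 1 else 0) * ∏ k ∈ Finset.range n, stepProb ω (γ k) (γ (k + 1))

/-- The annealed law `ℙ_x`. -/
def annealed {d : ℕ} (P : Env d → V d → Measure (Traj d)) (Pr : Measure (Env d)) (x : V d) :
    Measure (Traj d) := Pr.bind fun ω => P ω x

/-- The environment law is i.i.d. -/
def IsIID {d : ℕ} (Pr : Measure (Env d)) : Prop :=
  IsProbabilityMeasure Pr ∧
  iIndepFun (fun (x : V d) (ω : Env d) => ω x) Pr ∧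
  ∀ x : V d, Pr.map (fun ω => ω x) = Pr.map (fun ω => ω 0)

/-- Ellipticity. -/
def Elliptic {d : ℕ} (Pr : Measure (Env d)) : Prop :=
  ∀ᵐ ω ∂Pr, ∀ x e, 0 < pmf ω x e

/-- Exit time of a set. -/
def exitTime {d : ℕ} (A : Set (V d)) (X : Traj d) : ℕ∞ :=
  ⨅ (n : ℕ) (_ : X n ∉ A), (n : ℕ∞)

/-- Hitting time of a set. -/
def hitTime {d : ℕ} (A : Set (V d)) (X : Traj d) : ℕ∞ :=
  ⨅ (n : ℕ) (_ : X n ∈ A), (n : ℕ∞)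

/-- Positive hitting time of a set. -/
def retTime {d : ℕ} (A : Set (V d)) (X : Traj d) : ℕ∞ :=
  ⨅ (n : ℕ) (_ : 1 ≤ n ∧ X n ∈ A), (n : ℕ∞)

/-- Scalar product of `ℓ ∈ ℝ^d` with a site of `ℤ^d`. -/
def dot {d : ℕ} (ℓ : Fin d → ℝ) (x : V d) : ℝ := ∑ i, ℓ i * (x i : ℝ)

/-- `ℓ` belongs to the unit sphere `S^{d-1}`. -/
def UnitVec {d : ℕ} (ℓ : Fin d → ℝ) : Prop := ∑ i, ℓ i ^ 2 = 1

/-- The walk, under the annealed law, is transient in the direction `ℓ`. -/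
def Transient {d : ℕ} (P : Env d → V d → Measure (Traj d)) (Pr : Measure (Env d))
    (ℓ : Fin d → ℝ) : Prop :=
  annealed P Pr 0 {X | Tendsto (fun n => dot ℓ (X n)) atTop atTop} = 1

/-- The trajectory rescaled to `ℝ^d`. -/
def toR {d : ℕ} (x : V d) : Fin d → ℝ := fun i => (x i : ℝ)

/-- The unit hypercube based at `x`. -/
def cube {d : ℕ} (x : V d) : Set (V d) := {y | ∀ i, y i = x i ∨ y i = x i + 1}

/-- The corners of the unit hypercube based at `0`, as a finite set. -/
def cubePts (d : ℕ) : Finset (V d) :=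
  Finset.univ.image fun s : Fin d → Bool => (fun i => if s i then 1 else 0 : V d)

/-- The (outer) boundary of a set of sites. -/
def bdry {d : ℕ} (A : Set (V d)) : Set (V d) :=
  {z | z ∉ A ∧ ∃ w ∈ A, ∑ i, |z i - w i| = 1}

/-- The boundary points adjacent to `y`. -/
def bdryAt {d : ℕ} (y : V d) (A : Set (V d)) : Set (V d) :=
  {z | z ∈ bdry A ∧ ∑ i, |z i - y i| = 1}

/-- `Q^C_y`: the largest transition probability leading out of `C` from `y`. -/
def Qmax {d : ℕ} (ω : Env d) (C : Set (V d)) (y : V d) : ℝ :=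
  ⨆ e : Dir d, if y + dirVec d e ∈ bdryAt y C then pmf ω y e else 0

/-- The event that the walk exits `C` through a neighbour of `y` before returning to `x`. -/
def exitVia {d : ℕ} (C : Set (V d)) (x y : V d) : Set (Traj d) :=
  {X | ∃ n : ℕ, X n ∈ bdryAt y C ∧ (∀ m < n, X m ∉ bdry C) ∧ ∀ m, 1 ≤ m → m < n → X m ≠ x}

/-- `Q̃^C_{x,y}`: the quenched probability, starting from `x`, of exiting `C` through a
neighbour of `y` before returning to `x`. -/
def Qtilde {d : ℕ} (P : Env d → V d → Measure (Traj d)) (ω : Env d) (C : Set (V d))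
    (x y : V d) : ℝ := ((P ω x) (exitVia C x y)).toReal

/-- A marked Markovian hypercube: a unit hypercube containing `0` discovered in a Markovian
fashion by revealing sites `f 0 = 0, f 1, ...` one at a time, together with marks. -/
structure MMH (d : ℕ) where
  /-- The successively revealed sites. -/
  f : ℕ → Env d → V d
  /-- The marks, indexed by the corners of the unit hypercube at `0`. -/
  mark : V d → Env d → ℝ
  /-- The base point `x₀(ω)` of the revealed hypercube. -/
  x0 : Env d → V d
  f_zero : ∀ ω, f 0 ω = 0
  f_meas : ∀ i, Measurable (f i)
  f_local : ∀ i (ω ω' : Env d), (∀ j ≤ i, ω' (f j ω) = ω (f j ω)) → f (i + 1) ω' = f (i + 1) ω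
  f_adj : ∀ i ω, i + 1 < 2 ^ d → f (i + 1) ω ∈ bdry {y | ∃ j ≤ i, f j ω = y}
  x0_cube : ∀ ω, cube (x0 ω) = {y | ∃ j < 2 ^ d, f j ω = y}
  mark_nonneg : ∀ x ω, 0 ≤ mark x ω
  mark_meas : ∀ x, Measurable (mark x)
  mark_local : ∀ x (ω ω' : Env d), (∀ y ∈ cube (x0 ω), ω' y = ω y) → mark x ω' = mark x ω

/-- Condition `(K)_α` with explicit constant `ε` (parts (1), (2), (3)). -/
def CondKE {d : ℕ} (P : Env d → V d → Measure (Traj d)) (Pr : Measure (Env d))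
    (α ε : ℝ) : Prop :=
  ∃ γ : V d → ℝ, (∀ x, 0 ≤ γ x) ∧
    (∀ x ∈ cubePts d, ∫⁻ ω, (ENNReal.ofReal (Qmax ω (cube 0) x)) ^ (-(γ x)) ∂Pr < ⊤) ∧
    ∃ H : MMH d,
      (∫⁻ ω, ∏ x ∈ cubePts d,
          (ENNReal.ofReal (Qtilde P ω (cube (H.x0 ω)) 0 (H.x0 ω + x))) ^ (-(H.mark x ω)) ∂Pr
        < ⊤) ∧
      ∀ᵐ ω ∂Pr, α + ε ≤ ∑ x ∈ cubePts d, min (γ x) (H.mark x ω)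

/-- Condition `(K)_α`. -/
def CondK {d : ℕ} (P : Env d → V d → Measure (Traj d)) (Pr : Measure (Env d)) (α : ℝ) : Prop :=
  ∃ ε > (0 : ℝ), CondKE P Pr α ε

/-- Condition `(E)_0`. -/
def CondE0 {d : ℕ} (Pr : Measure (Env d)) : Prop :=
  ∀ e : Dir d, ∃ η > (0 : ℝ), ∫⁻ ω, (ENNReal.ofReal (pmf ω 0 e)) ^ (-η) ∂Pr < ⊤

/-- The coordinates of `z ∈ ℤ^d` in the rotated frame `R`. -/
def tiltCoord {d : ℕ} (R : EuclideanSpace ℝ (Fin d) ≃ₗᵢ[ℝ] EuclideanSpace ℝ (Fin d))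
    (z : V d) : Fin d → ℝ :=
  WithLp.equiv 2 (Fin d → ℝ) (R.symm ((WithLp.equiv 2 (Fin d → ℝ)).symm fun j => (z j : ℝ)))

/-- The box `B^ℓ_{L,L',L̃}`: the image under the rotation `R` of
`(-L',L) × (-L̃,L̃)^{d-1}`, intersected with `ℤ^d`. -/
def polyBox {d : ℕ} (R : EuclideanSpace ℝ (Fin d) ≃ₗᵢ[ℝ] EuclideanSpace ℝ (Fin d))
    (L L' Lt : ℝ) : Set (V d) :=
  {z | (∀ i : Fin d, (i : ℕ) = 0 → tiltCoord R z i ∈ Set.Ioo (-L') L) ∧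
       ∀ i : Fin d, (i : ℕ) ≠ 0 → tiltCoord R z i ∈ Set.Ioo (-Lt) Lt}

/-- The first coordinate vector of `ℝ^d` as an element of Euclidean space. -/
def euc1 (d : ℕ) : EuclideanSpace ℝ (Fin d) :=
  (WithLp.equiv 2 (Fin d → ℝ)).symm fun i => if (i : ℕ) = 0 then 1 else 0

/-- The polynomial condition `(P)^ℓ_M`. -/
def CondP {d : ℕ} (P : Env d → V d → Measure (Traj d)) (Pr : Measure (Env d))
    (ℓ : Fin d → ℝ) (M : ℝ) : Prop :=
  ∃ R : EuclideanSpace ℝ (Fin d) ≃ₗᵢ[ℝ] EuclideanSpace ℝ (Fin d),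
    R (euc1 d) = (WithLp.equiv 2 (Fin d → ℝ)).symm ℓ ∧
    ∀ L : ℝ, 2 / 3 * 3 ^ (29 * d) ≤ L →
      ∃ L' ≤ 5 / 4 * L, ∃ Lt ≤ 72 * L ^ 3,
        annealed P Pr 0
          {X | ∃ n, X n ∉ polyBox R L L' Lt ∧ (∀ m < n, X m ∈ polyBox R L L' Lt) ∧
                dot ℓ (X n) < L}
          ≤ ENNReal.ofReal (L ^ (-M))

/-- The backtracking time `D = inf{n ≥ 0 : X_n·ℓ < X_0·ℓ}`. -/
def Dtime {d : ℕ} (ℓ : Fin d → ℝ) (X : Traj d) : ℕ∞ :=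
  ⨅ (n : ℕ) (_ : dot ℓ (X n) < dot ℓ (X 0)), (n : ℕ∞)

/-- The triples `(S_k, R_k, M_k)` of the regeneration structure. -/
def regenAux {d : ℕ} (ℓ : Fin d → ℝ) (a : ℝ) (X : Traj d) : ℕ → ℕ∞ × ℕ∞ × EReal
  | 0 => (0, 0, ((dot ℓ (X 0) : ℝ) : EReal))
  | k + 1 =>
    let M := (regenAux ℓ a X k).2.2
    let S : ℕ∞ := ⨅ (n : ℕ) (_ : M + (a : EReal) < ((dot ℓ (X n) : ℝ) : EReal)), (n : ℕ∞)
    let R : ℕ∞ := ⨅ (n : ℕ) (_ : (n : ℕ∞) = S), (S + Dtime ℓ fun m => X (n + m))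
    (S, R, ⨆ (n : ℕ) (_ : (n : ℕ∞) ≤ R), ((dot ℓ (X n) : ℝ) : EReal))

/-- The first regeneration time `τ₁ = S_K`. -/
def tau1 {d : ℕ} (ℓ : Fin d → ℝ) (a : ℝ) (X : Traj d) : ℕ∞ :=
  ⨅ (k : ℕ) (_ : 1 ≤ k ∧ (regenAux ℓ a X k).1 ≠ ⊤ ∧ (regenAux ℓ a X k).2.1 = ⊤),
    (regenAux ℓ a X k).1

/-- The `ℓ¹` norm on `ℤ^d`. -/
def norm1 {d : ℕ} (x : V d) : ℤ := ∑ i, |x i|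

/-- `ℙ`-expectation, under the annealed law started at `x`, of `(T^ex_𝔥)^α`. -/
def cubeExitMoment {d : ℕ} (P : Env d → V d → Measure (Traj d)) (Pr : Measure (Env d))
    (x : V d) (α : ℝ) : ℝ≥0∞ :=
  ∫⁻ X, ((exitTime (cube 0) X : ℝ≥0∞)) ^ α ∂(annealed P Pr x)

/-- The uniform probability measure on the set of directions. -/
def uniformDir (d : ℕ) : Measure (Dir d) :=
  ((Fintype.card (Dir d) : ℝ≥0∞))⁻¹ • ∑ e : Dir d, Measure.dirac e

/-- The transition vector of the example environment `𝐏^expl` with strength `ε`, as a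
function of the variables `(T, i₀)`: direction `i₀` gets probability `1/T`, the remaining
"positive" directions share `1 - ε` (minus `1/T` if `i₀` is positive), and the remaining
"negative" directions share `ε` (minus `1/T` if `i₀` is negative). -/
def pexpl (d : ℕ) (ε : ℝ) (ti : ℝ × Dir d) : Dir d → ℝ := fun e =>
  if e = ti.2 then 1 / ti.1
  else if e.2 then
    (1 - ε - (if ti.2.2 then 1 / ti.1 else 0)) / ((d : ℝ) - (if ti.2.2 then 1 else 0))
  else (ε - (if ti.2.2 then 0 else 1 / ti.1)) / ((d : ℝ) - (if ti.2.2 then 0 else 1))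

/-- The law `𝐏` is the i.i.d. environment `𝐏^expl` with parameter `ε`: the common site
marginal is the law of `pexpl (T, i₀)` where `T ≥ 2d+1` a.s. with
`𝐄[T^{1/(4d)}] = ∞`, `𝐄[T^{1/(8d)}] < ∞`, and `i₀` is an independent uniform direction. -/
def IsPexpl {d : ℕ} (Pr : Measure (Env d)) (ε : ℝ) : Prop :=
  IsIID Pr ∧
  ∃ μT : Measure ℝ, IsProbabilityMeasure μT ∧
    μT {t | 2 * (d : ℝ) + 1 ≤ t} = 1 ∧
    (∫⁻ t, ENNReal.ofReal (t ^ ((1 : ℝ) / (4 * d))) ∂μT = ⊤) ∧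
    (∫⁻ t, ENNReal.ofReal (t ^ ((1 : ℝ) / (8 * d))) ∂μT < ⊤) ∧
    Pr.map (fun ω => ((ω 0).1 : Dir d → ℝ)) = (μT.prod (uniformDir d)).map (pexpl d ε)
/-- The slab `U^{ℓ'}_b(L) = {x : -bL ≤ x·ℓ' ≤ L}`. -/
def slab {d : ℕ} (ℓ' : Fin d → ℝ) (b L : ℝ) : Set (V d) :=
  {x | -(b * L) ≤ dot ℓ' x ∧ dot ℓ' x ≤ L}

/-- Sznitman's condition `(T)^ℓ`: for all unit `ℓ'` in a neighbourhood of `ℓ`, the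
probability of exiting the slab `U^{ℓ'}_b(L)` on the wrong side decays exponentially. -/
def CondT {d : ℕ} (P : Env d → V d → Measure (Traj d)) (Pr : Measure (Env d))
    (ℓ : Fin d → ℝ) : Prop :=
  ∃ r > (0 : ℝ), ∃ b > (0 : ℝ), ∀ ℓ' : Fin d → ℝ, UnitVec ℓ' → (∑ i, (ℓ' i - ℓ i) ^ 2 < r) →
    Filter.limsup
      (fun L : ℝ => L⁻¹ * Real.log
        ((annealed P Pr 0
          {X | ∃ n, X n ∉ slab ℓ' b L ∧ (∀ m < n, X m ∈ slab ℓ' b L) ∧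
            dot ℓ' (X n) < 0}).toReal))
      atTop < 0

/-!
Under `𝐏^expl` every site puts total mass `1 - ε` on the steps `e_1, …, e_d`, so under every
quenched law `X_n · ℓ₀` is a `±1` random walk with drift `1 - 2ε`. Exponential Chebyshev bounds
along nearest-neighbour paths are summable in `n`, and Borel–Cantelli gives the law of large
numbers, hence transience.

For `ℓ'` close to `ℓ₀ / |ℓ₀|` every coordinate of `ℓ'` lies in `[c/2, 3c/2]`, `c = d^{-1/2}`, so
when `ε < 1/5` the quenched one-step mean of `exp (-(X · ℓ') / 100)` is at most `1 - c/2000`.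
A union bound over `n` then bounds the probability of leaving the slab on the wrong side by a
constant times `e^{-L/100}`, while a path of `O(L)` backward steps shows that this probability
is at least exponentially small, which keeps its logarithm under control.
-/
lemma sum_fin_succ_pi {α M : Type*} [Fintype α] [AddCommMonoid M] {n : ℕ}
    (F : (Fin (n + 1) → α) → M) : ∑ f, F f = ∑ a : α, ∑ f : Fin n → α, F (Fin.cons a f) := by
  rw [← Fintype.sum_prod_type']
  exact (Fintype.sum_equiv (Fin.consEquiv fun _ => α) _ _ fun _ => rfl).symm

section Paths

variable {d : ℕ}

lemma dirVec_injective : Function.Injective (dirVec d) := by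
  intro e e' h
  have h1 := congrFun h e.1
  simp only [dirVec] at h1
  by_cases hf : e.1 = e'.1
  · refine Prod.ext hf ?_
    rw [if_pos trivial, if_pos hf] at h1
    cases hb : e.2 <;> cases hb' : e'.2 <;> simp_all
  · rw [if_pos trivial, if_neg hf] at h1
    cases hb : e.2 <;> simp_all

lemma pmf_nonneg (ω : Env d) (x : V d) (e : Dir d) : 0 ≤ pmf ω x e := (ω x).2.1 e

lemma sum_pmf (ω : Env d) (x : V d) : ∑ e : Dir d, pmf ω x e = 1 := (ω x).2.2

lemma stepProb_add_dirVec (ω : Env d) (x : V d) (e : Dir d) :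
    stepProb ω x (x + dirVec d e) = pmf ω x e := by
  rw [stepProb, Finset.sum_eq_single e, if_pos rfl]
  · exact fun e' _ hne => if_neg fun h => hne (dirVec_injective (add_left_cancel h)).symm
  · exact fun h => absurd (Finset.mem_univ e) h

/-- The position after the first `min k n` steps of `es`, starting from `x`. -/
def posAt : {n : ℕ} → V d → (Fin n → Dir d) → ℕ → V d
  | 0, x, _, _ => x
  | _ + 1, x, _, 0 => x
  | n + 1, x, es, k + 1 => posAt (n := n) (x + dirVec d (es 0)) (Fin.tail es) k

@[simp]
lemma posAt_zero {n : ℕ} (x : V d) (es : Fin n → Dir d) : posAt x es 0 = x := by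
  cases n <;> rfl

lemma posAt_succ : ∀ {n : ℕ} (x : V d) (es : Fin n → Dir d) (k : ℕ) (hk : k < n),
    posAt x es (k + 1) = posAt x es k + dirVec d (es ⟨k, hk⟩)
  | 0, _, _, k, hk => absurd hk (Nat.not_lt_zero k)
  | n + 1, x, es, 0, _ => by
    show posAt (x + dirVec d (es 0)) (Fin.tail es) 0 = posAt x es 0 + dirVec d (es 0)
    simp
  | n + 1, x, es, k + 1, hk => by
    show posAt (x + dirVec d (es 0)) (Fin.tail es) (k + 1)
        = posAt (x + dirVec d (es 0)) (Fin.tail es) k + dirVec d (es ⟨k + 1, hk⟩)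
    rw [posAt_succ (x + dirVec d (es 0)) (Fin.tail es) k (Nat.lt_of_succ_lt_succ hk)]
    rfl

def pathProb (ω : Env d) {n : ℕ} (x : V d) (es : Fin n → Dir d) : ℝ :=
  ∏ k : Fin n, pmf ω (posAt x es k) (es k)

lemma pathProb_nonneg (ω : Env d) {n : ℕ} (x : V d) (es : Fin n → Dir d) :
    0 ≤ pathProb ω x es :=
  Finset.prod_nonneg fun _ _ => pmf_nonneg ω _ _

lemma pathProb_cons (ω : Env d) {n : ℕ} (x : V d) (e : Dir d) (es : Fin n → Dir d) :
    pathProb ω x (Fin.cons e es) = pmf ω x e * pathProb ω (x + dirVec d e) es := by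
  rw [pathProb, Fin.prod_univ_succ]
  rfl

lemma sum_pathProb_mul_prod_le (ω : Env d) (w : Dir d → ℝ) (hw : ∀ e, 0 ≤ w e) {K : ℝ}
    (hK : 0 ≤ K) (hsite : ∀ y : V d, ∑ e, pmf ω y e * w e ≤ K) :
    ∀ (n : ℕ) (x : V d), ∑ es : Fin n → Dir d, pathProb ω x es * ∏ k, w (es k) ≤ K ^ n
  | 0, x => by simp [pathProb]
  | n + 1, x => by
    have hstep (e : Dir d) :
        ∑ es : Fin n → Dir d, pathProb ω x (Fin.cons e es) *
          ∏ k, w ((Fin.cons e es : Fin (n + 1) → Dir d) k)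
          ≤ pmf ω x e * w e * K ^ n := by
      simp only [pathProb_cons, Fin.prod_univ_succ, Fin.cons_zero, Fin.cons_succ]
      calc ∑ es : Fin n → Dir d,
            pmf ω x e * pathProb ω (x + dirVec d e) es * (w e * ∏ k, w (es k))
          = pmf ω x e * w e * ∑ es : Fin n → Dir d,
              pathProb ω (x + dirVec d e) es * ∏ k, w (es k) := by
            rw [Finset.mul_sum]; exact Finset.sum_congr rfl fun _ _ => by ring
        _ ≤ pmf ω x e * w e * K ^ n :=
            mul_le_mul_of_nonneg_left (sum_pathProb_mul_prod_le ω w hw hK hsite n _)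
              (mul_nonneg (pmf_nonneg ω x e) (hw e))
    calc ∑ es : Fin (n + 1) → Dir d, pathProb ω x es * ∏ k, w (es k)
        ≤ ∑ e, pmf ω x e * w e * K ^ n := by
          rw [sum_fin_succ_pi]; exact Finset.sum_le_sum fun e _ => hstep e
      _ = (∑ e, pmf ω x e * w e) * K ^ n := by rw [Finset.sum_mul]
      _ ≤ K ^ (n + 1) := by
          rw [pow_succ']; exact mul_le_mul_of_nonneg_right (hsite x) (pow_nonneg hK n)

lemma sum_pathProb (ω : Env d) : ∀ (n : ℕ) (x : V d), ∑ es : Fin n → Dir d, pathProb ω x es = 1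
  | 0, x => by simp [pathProb]
  | n + 1, x => by
    simp only [sum_fin_succ_pi, pathProb_cons, ← Finset.mul_sum, sum_pathProb ω n, mul_one,
      sum_pmf]

end Paths

section Cylinders

variable {d : ℕ}

lemma measurableSet_traj (n : ℕ) (A : Set (V d)) : MeasurableSet {X : Traj d | X n ∈ A} :=
  measurable_pi_apply n A.to_countable.measurableSet

def cyl (x : V d) {n : ℕ} (es : Fin n → Dir d) : Set (Traj d) :=
  {X | ∀ k ≤ n, X k = posAt x es k}

lemma measurableSet_cyl (x : V d) {n : ℕ} (es : Fin n → Dir d) : MeasurableSet (cyl x es) := by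
  have : cyl x es = ⋂ k ∈ Set.Iic n, {X : Traj d | X k ∈ ({posAt x es k} : Set (V d))} := by
    ext X
    simp [cyl]
  rw [this]
  exact .biInter (Set.to_countable _) fun k _ => measurableSet_traj k _

lemma pairwise_disjoint_cyl (x : V d) (n : ℕ) :
    Pairwise fun es es' : Fin n → Dir d => Disjoint (cyl x es) (cyl x es') := by
  refine fun es es' hne => Set.disjoint_left.2 fun X h h' => hne (funext fun k => ?_)
  have hstep (es : Fin n → Dir d) (h : X ∈ cyl x es) : X (k + 1) = X k + dirVec d (es k) := by
    rw [h _ k.isLt, h _ k.isLt.le, posAt_succ x es k k.isLt]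
  exact dirVec_injective (add_left_cancel ((hstep es h).symm.trans (hstep es' h')))

variable {P : Env d → V d → Measure (Traj d)}

lemma quenched_cyl (hP : IsQuenched P) (ω : Env d) (x : V d) {n : ℕ} (es : Fin n → Dir d) :
    P ω x (cyl x es) = ENNReal.ofReal (pathProb ω x es) := by
  have := hP.1 ω x
  rw [← ENNReal.ofReal_toReal (measure_ne_top (P ω x) _), cyl, hP.2.2 ω x n fun k => posAt x es k,
    if_pos (posAt_zero x es), one_mul, ← Fin.prod_univ_eq_prod_range, pathProb]
  congr 1
  exact Finset.prod_congr rfl fun k _ => by rw [posAt_succ x es k k.isLt, stepProb_add_dirVec]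

lemma quenched_iUnion_cyl (hP : IsQuenched P) (ω : Env d) (x : V d) (n : ℕ) :
    P ω x (⋃ es : Fin n → Dir d, cyl x es) = 1 := by
  rw [measure_iUnion (pairwise_disjoint_cyl x n) (measurableSet_cyl x), tsum_fintype]
  simp only [quenched_cyl hP]
  rw [← ENNReal.ofReal_sum_of_nonneg fun es _ => pathProb_nonneg ω x es, sum_pathProb,
    ENNReal.ofReal_one]

lemma quenched_le_sum_pathProb (hP : IsQuenched P) (ω : Env d) (x : V d) {n : ℕ}
    (G : Set (Traj d)) (S : Finset (Fin n → Dir d)) (hS : ∀ es ∉ S, Disjoint G (cyl x es)) :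
    P ω x G ≤ ENNReal.ofReal (∑ es ∈ S, pathProb ω x es) := by
  have := hP.1 ω x
  have hfull : ⋃ es : Fin n → Dir d, cyl x es ∈ ae (P ω x) :=
    mem_ae_iff.2 ((prob_compl_eq_zero_iff (.iUnion (measurableSet_cyl x))).2
      (quenched_iUnion_cyl hP ω x n))
  have hG : G ≤ᵐ[P ω x] ⋃ es ∈ S, cyl x es := by
    filter_upwards [hfull] with X hX hXG
    obtain ⟨es, hes⟩ := Set.mem_iUnion.1 hX
    by_cases h : es ∈ S
    · exact Set.mem_biUnion h hes
    · exact absurd hes (Set.disjoint_left.1 (hS es h) hXG)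
  calc P ω x G ≤ P ω x (⋃ es ∈ S, cyl x es) := measure_mono_ae hG
    _ ≤ ∑ es ∈ S, P ω x (cyl x es) := measure_biUnion_finset_le S _
    _ = ENNReal.ofReal (∑ es ∈ S, pathProb ω x es) := by
        simp only [quenched_cyl hP]
        exact (ENNReal.ofReal_sum_of_nonneg fun es _ => pathProb_nonneg ω x es).symm

lemma sum_pathProb_le_quenched (hP : IsQuenched P) (ω : Env d) (x : V d) {n : ℕ}
    (G : Set (Traj d)) (S : Finset (Fin n → Dir d)) (hS : ∀ es ∈ S, cyl x es ⊆ G) :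
    ENNReal.ofReal (∑ es ∈ S, pathProb ω x es) ≤ P ω x G :=
  calc ENNReal.ofReal (∑ es ∈ S, pathProb ω x es) = ∑ es ∈ S, P ω x (cyl x es) := by
        simp only [quenched_cyl hP]
        exact ENNReal.ofReal_sum_of_nonneg fun es _ => pathProb_nonneg ω x es
    _ = P ω x (⋃ es ∈ S, cyl x es) :=
        (measure_biUnion_finset (fun _ _ _ _ h => pairwise_disjoint_cyl x n h)
          fun es _ => measurableSet_cyl x es).symm
    _ ≤ P ω x G := measure_mono (Set.iUnion₂_subset hS)

end Cylinders

section Dot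

variable {d : ℕ}

lemma dot_add (ℓ : Fin d → ℝ) (x y : V d) : dot ℓ (x + y) = dot ℓ x + dot ℓ y := by
  simp only [dot, Pi.add_apply, Int.cast_add, mul_add, Finset.sum_add_distrib]

@[simp]
lemma dot_zero (ℓ : Fin d → ℝ) : dot ℓ (0 : V d) = 0 := by simp [dot]

lemma dot_const (c : ℝ) (x : V d) : dot (fun _ => c) x = c * dot (fun _ => 1) x := by
  simp [dot, Finset.mul_sum]

lemma dot_dirVec (ℓ : Fin d → ℝ) (e : Dir d) :
    dot ℓ (dirVec d e) = if e.2 then ℓ e.1 else -ℓ e.1 := by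
  rw [dot, Finset.sum_eq_single e.1 (fun i _ hne => by simp [dirVec, hne])
    (fun h => absurd (Finset.mem_univ _) h)]
  obtain ⟨i, b⟩ := e
  cases b <;> simp [dirVec]

lemma dot_posAt (ℓ : Fin d → ℝ) : ∀ {n : ℕ} (x : V d) (es : Fin n → Dir d),
    dot ℓ (posAt x es n) = dot ℓ x + ∑ k, dot ℓ (dirVec d (es k))
  | 0, x, es => by simp
  | n + 1, x, es => by
    show dot ℓ (posAt (x + dirVec d (es 0)) (Fin.tail es) n) = _
    rw [dot_posAt, dot_add, Fin.sum_univ_succ, add_assoc]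
    rfl

end Dot

section Chernoff

variable {d : ℕ} {P : Env d → V d → Measure (Traj d)}

lemma quenched_exp_tail_le (hP : IsQuenched P) (ω : Env d) (ℓ : Fin d → ℝ) (s r : ℝ) {K : ℝ}
    (hK : 0 ≤ K) (hsite : ∀ y : V d, ∑ e, pmf ω y e * Real.exp (s * dot ℓ (dirVec d e)) ≤ K)
    (n : ℕ) :
    P ω 0 {X | r ≤ s * dot ℓ (X n)} ≤ ENNReal.ofReal (Real.exp (-r) * K ^ n) := by
  set w : Dir d → ℝ := fun e => Real.exp (s * dot ℓ (dirVec d e))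
  set S := Finset.univ.filter fun es : Fin n → Dir d => r ≤ s * dot ℓ (posAt 0 es n)
  have hS : ∀ es ∉ S, Disjoint {X : Traj d | r ≤ s * dot ℓ (X n)} (cyl 0 es) :=
    fun es hes => Set.disjoint_left.2 fun X hX hXes =>
      hes (Finset.mem_filter.2 ⟨Finset.mem_univ _, hXes n le_rfl ▸ hX⟩)
  have hmarkov : ∀ es ∈ S, pathProb ω 0 es ≤ Real.exp (-r) * (pathProb ω 0 es * ∏ k, w (es k)) := by
    intro es hes
    have hprod : ∏ k, w (es k) = Real.exp (s * dot ℓ (posAt 0 es n)) := by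
      rw [dot_posAt, dot_zero, zero_add, Finset.mul_sum, Real.exp_sum]
    have hone : 1 ≤ Real.exp (-r) * ∏ k, w (es k) := by
      rw [hprod, ← Real.exp_add]
      exact Real.one_le_exp (by linarith [(Finset.mem_filter.1 hes).2])
    nlinarith [pathProb_nonneg ω 0 es]
  refine (quenched_le_sum_pathProb hP ω 0 _ S hS).trans (ENNReal.ofReal_le_ofReal ?_)
  have hw : ∀ e, 0 ≤ w e := fun e => Real.exp_nonneg _
  calc ∑ es ∈ S, pathProb ω 0 es
      ≤ ∑ es ∈ S, Real.exp (-r) * (pathProb ω 0 es * ∏ k, w (es k)) := Finset.sum_le_sum hmarkov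
    _ ≤ Real.exp (-r) * ∑ es, pathProb ω 0 es * ∏ k, w (es k) := by
        rw [← Finset.mul_sum]
        exact mul_le_mul_of_nonneg_left (Finset.sum_le_sum_of_subset_of_nonneg S.subset_univ
          fun es _ _ => mul_nonneg (pathProb_nonneg ω 0 es)
            (Finset.prod_nonneg fun k _ => hw _)) (Real.exp_nonneg _)
    _ ≤ Real.exp (-r) * K ^ n :=
        mul_le_mul_of_nonneg_left (sum_pathProb_mul_prod_le ω w hw hK hsite n 0) (Real.exp_nonneg _)

end Chernoff

section Annealed

variable {d : ℕ} {P : Env d → V d → Measure (Traj d)} {Pr : Measure (Env d)}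

lemma annealed_apply (hP : IsQuenched P) (x : V d) {G : Set (Traj d)} (hG : MeasurableSet G) :
    annealed P Pr x G = ∫⁻ ω, P ω x G ∂Pr :=
  Measure.bind_apply hG (hP.2.1 x).aemeasurable

lemma isProbabilityMeasure_annealed (hP : IsQuenched P) [IsProbabilityMeasure Pr] (x : V d) :
    IsProbabilityMeasure (annealed P Pr x) := by
  constructor
  rw [annealed_apply hP x .univ]
  simp [fun ω => (hP.1 ω x).measure_univ]

lemma annealed_le_of_ae (hP : IsQuenched P) [IsProbabilityMeasure Pr] (x : V d)
    {G : Set (Traj d)} (hG : MeasurableSet G) {β : ℝ≥0∞} (h : ∀ᵐ ω ∂Pr, P ω x G ≤ β) :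
    annealed P Pr x G ≤ β := by
  rw [annealed_apply hP x hG]
  simpa using lintegral_mono_ae h

lemma le_annealed_of_ae (hP : IsQuenched P) [IsProbabilityMeasure Pr] (x : V d)
    {G : Set (Traj d)} {β : ℝ≥0∞} (h : ∀ᵐ ω ∂Pr, β ≤ P ω x G) : β ≤ annealed P Pr x G := by
  rw [← measure_toMeasurable, annealed_apply hP x (measurableSet_toMeasurable _ _)]
  calc β = ∫⁻ _, β ∂Pr := by simp
    _ ≤ ∫⁻ ω, P ω x (toMeasurable (annealed P Pr x) G) ∂Pr :=
        lintegral_mono_ae (h.mono fun ω hω => hω.trans (measure_mono (subset_toMeasurable _ _)))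

end Annealed

section ForwardMass

variable {d : ℕ}

def forwardMass (ω : Env d) (x : V d) : ℝ := ∑ i, pmf ω x (i, true)

lemma sum_pmf_backward (ω : Env d) (x : V d) :
    ∑ i, pmf ω x (i, false) = 1 - forwardMass ω x := by
  rw [forwardMass, eq_sub_iff_add_eq, ← Finset.sum_add_distrib, ← sum_pmf ω x,
    Fintype.sum_prod_type]
  exact Finset.sum_congr rfl fun i _ => by rw [Fintype.sum_bool, add_comm]

lemma sum_pmf_mul_le (ω : Env d) (x : V d) (w : Dir d → ℝ) {Wp Wn : ℝ}
    (hp : ∀ i, w (i, true) ≤ Wp) (hn : ∀ i, w (i, false) ≤ Wn) :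
    ∑ e, pmf ω x e * w e ≤ forwardMass ω x * Wp + (1 - forwardMass ω x) * Wn := by
  rw [← sum_pmf_backward, forwardMass, Finset.sum_mul, Finset.sum_mul, ← Finset.sum_add_distrib,
    Fintype.sum_prod_type]
  refine Finset.sum_le_sum fun i _ => ?_
  rw [Fintype.sum_bool]
  exact add_le_add (mul_le_mul_of_nonneg_left (hp i) (pmf_nonneg ω x _))
    (mul_le_mul_of_nonneg_left (hn i) (pmf_nonneg ω x _))

lemma exists_pmf_backward_ge (hd : 0 < d) (ω : Env d) (x : V d) :
    ∃ i : Fin d, (1 - forwardMass ω x) / d ≤ pmf ω x (i, false) := by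
  have : Nonempty (Fin d) := ⟨⟨0, hd⟩⟩
  have hsum : ∑ _i : Fin d, (1 - forwardMass ω x) / d ≤ ∑ i, pmf ω x (i, false) := by
    rw [sum_pmf_backward, Finset.sum_const, Finset.card_univ, Fintype.card_fin, nsmul_eq_mul,
      mul_div_cancel₀ _ (by positivity)]
  obtain ⟨i, -, hi⟩ := Finset.exists_le_of_sum_le Finset.univ_nonempty hsum
  exact ⟨i, hi⟩

variable {P : Env d → V d → Measure (Traj d)}

lemma quenched_first_step_forward (hP : IsQuenched P) (ω : Env d) :
    (P ω 0 {X | dot (fun _ => (1 : ℝ)) (X 1) = 1}).toReal = forwardMass ω 0 := by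
  set S := Finset.univ.filter fun es : Fin 1 → Dir d => (es 0).2
  have hdot (es : Fin 1 → Dir d) :
      dot (fun _ => (1 : ℝ)) (posAt 0 es 1) = if (es 0).2 then 1 else -1 := by
    rw [dot_posAt, Fin.sum_univ_one, dot_dirVec]
    split_ifs <;> simp
  have hsum : ∑ es ∈ S, pathProb ω 0 es = forwardMass ω 0 := by
    rw [Finset.sum_filter, forwardMass, Fintype.sum_equiv (Equiv.funUnique (Fin 1) (Dir d)) _
      (fun e => if e.2 then pmf ω 0 e else 0) fun es => by simp [pathProb], Fintype.sum_prod_type]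
    simp
  have hle := quenched_le_sum_pathProb hP ω 0 {X | dot (fun _ => (1 : ℝ)) (X 1) = 1} S
    fun es hes => Set.disjoint_left.2 fun X hX hXes => hes <| Finset.mem_filter.2
      ⟨Finset.mem_univ _, by
        rw [Set.mem_ofPred_eq, hXes 1 le_rfl, hdot] at hX
        split_ifs at hX with h <;> first | exact h | norm_num at hX⟩
  have hge := sum_pathProb_le_quenched hP ω 0 {X | dot (fun _ => (1 : ℝ)) (X 1) = 1} S
    fun es hes X hXes => by
      rw [Set.mem_ofPred_eq, hXes 1 le_rfl, hdot, if_pos (Finset.mem_filter.1 hes).2]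
  rw [le_antisymm hle hge, hsum, ENNReal.toReal_ofReal]
  exact hsum ▸ Finset.sum_nonneg fun es _ => pathProb_nonneg ω 0 es

end ForwardMass

section Pexpl

variable {d : ℕ}

lemma sum_pexpl_forward (hd : 2 ≤ d) (ε t : ℝ) (e₀ : Dir d) :
    ∑ i, pexpl d ε (t, e₀) (i, true) = 1 - ε := by
  obtain ⟨i₀, b₀⟩ := e₀
  have hd2 : (2 : ℝ) ≤ d := by exact_mod_cast hd
  cases b₀ with
  | false =>
    simp only [pexpl, Prod.mk.injEq, reduceCtorEq, and_false, if_false, if_true, tsub_zero]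
    rw [Finset.sum_const, Finset.card_univ, Fintype.card_fin, nsmul_eq_mul]
    field_simp
  | true =>
    have hd1 : (d : ℝ) - 1 ≠ 0 := by linarith
    have hval (i : Fin d) : pexpl d ε (t, (i₀, true)) (i, true)
        = (1 - ε - 1 / t) / (d - 1) + if i = i₀ then 1 / t - (1 - ε - 1 / t) / (d - 1) else 0 := by
      by_cases hi : i = i₀ <;> simp [pexpl, hi]
    simp only [hval, Finset.sum_add_distrib, Finset.sum_ite_eq', Finset.mem_univ, if_true,
      Finset.sum_const, Finset.card_univ, Fintype.card_fin, nsmul_eq_mul]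
    field_simp
    ring

lemma measurable_pexpl (ε : ℝ) : Measurable (pexpl d ε) := by
  refine measurable_pi_lambda _ fun e => measurable_from_prod_countable_left fun e₀ => ?_
  have h : Measurable fun t : ℝ => 1 / t := measurable_const.div measurable_id
  simp only [pexpl]
  split_ifs <;> fun_prop

lemma ae_forwardMass_eq {Pr : Measure (Env d)} {ε : ℝ} (hd : 2 ≤ d) (hPr : IsPexpl Pr ε) :
    ∀ᵐ ω ∂Pr, ∀ x, forwardMass ω x = 1 - ε := by
  obtain ⟨⟨-, -, hmarg⟩, μT, -, -, -, -, hmap⟩ := hPr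
  set T : Set (Dir d → ℝ) := {p | ∑ i, p (i, true) = 1 - ε}
  have hT : MeasurableSet T :=
    (Finset.measurable_sum _ fun i _ => measurable_pi_apply (i, true)) (measurableSet_singleton _)
  have hval : Measurable (Subtype.val : ProbVec d → Dir d → ℝ) := measurable_subtype_coe
  have h0 : Pr.map (fun ω => ω 0) (Subtype.val ⁻¹' T)ᶜ = 0 := by
    rw [← Set.preimage_compl, ← Measure.map_apply hval hT.compl,
      Measure.map_map hval (measurable_pi_apply 0), Function.comp_def, hmap]
    have hempty : pexpl d ε ⁻¹' Tᶜ = ∅ :=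
      Set.eq_empty_of_forall_notMem fun ti h => h (sum_pexpl_forward hd ε ti.1 ti.2)
    rw [Measure.map_apply (measurable_pexpl ε) hT.compl, hempty, measure_empty]
  refine ae_all_iff.2 fun x => ae_iff.2 ?_
  have := hmarg x ▸ h0
  rw [Measure.map_apply (measurable_pi_apply x) (measurable_subtype_coe hT).compl] at this
  exact this

end Pexpl

lemma ae_tendsto_div_of_summable_deviation {Ω : Type*} [MeasurableSpace Ω] {μ : Measure Ω}
    {Y : ℕ → Ω → ℝ} {m : ℝ} (h : ∀ δ > 0, ∑' n, μ {ω | δ * n ≤ |Y n ω - m * n|} ≠ ∞) :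
    ∀ᵐ ω ∂μ, Tendsto (fun n => Y n ω / n) atTop (𝓝 m) := by
  have hev : ∀ᵐ ω ∂μ, ∀ j : ℕ, ∀ᶠ n in atTop, ¬ 1 / ((j : ℝ) + 1) * n ≤ |Y n ω - m * n| :=
    ae_all_iff.2 fun j => ae_eventually_notMem (h _ (by positivity))
  filter_upwards [hev] with ω hω
  refine Metric.tendsto_atTop.2 fun η hη => ?_
  obtain ⟨j, hj⟩ := exists_nat_one_div_lt hη
  obtain ⟨N, hN⟩ := ((hω j).and (eventually_ge_atTop 1)).exists_forall_of_atTop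
  refine ⟨N, fun n hn => ?_⟩
  obtain ⟨hdev, hn1⟩ := hN n hn
  have hn0 : (0 : ℝ) < n := by exact_mod_cast hn1
  rw [Real.dist_eq, div_sub' hn0.ne', abs_div, abs_of_pos hn0, div_lt_iff₀ hn0, mul_comm (n : ℝ) m]
  exact (not_le.1 hdev).trans (mul_lt_mul_of_pos_right hj hn0)

section Level

variable {d : ℕ} {P : Env d → V d → Measure (Traj d)} {Pr : Measure (Env d)} {ε : ℝ}

lemma two_point_mgf_le (hε0 : 0 ≤ ε) (hε1 : ε ≤ 1) {s : ℝ} (hs : |s| ≤ 1) :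
    (1 - ε) * Real.exp s + ε * Real.exp (-s) ≤ Real.exp ((1 - 2 * ε) * s + s ^ 2) := by
  have h₁ := (abs_le.1 (Real.abs_exp_sub_one_sub_id_le hs)).2
  have h₂ := (abs_le.1 (Real.abs_exp_sub_one_sub_id_le (x := -s) (by rwa [abs_neg]))).2
  nlinarith [Real.add_one_le_exp ((1 - 2 * ε) * s + s ^ 2),
    mul_le_mul_of_nonneg_left h₁ (sub_nonneg.2 hε1), mul_le_mul_of_nonneg_left h₂ hε0]

lemma annealed_level_tail_le (hP : IsQuenched P) [IsProbabilityMeasure Pr]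
    (hmass : ∀ᵐ ω ∂Pr, ∀ x, forwardMass ω x = 1 - ε) (hε0 : 0 ≤ ε) (hε1 : ε ≤ 1) {s : ℝ}
    (hs : |s| ≤ 1) (r : ℝ) (n : ℕ) :
    annealed P Pr 0 {X | r ≤ s * dot (fun _ => (1 : ℝ)) (X n)}
      ≤ ENNReal.ofReal (Real.exp (((1 - 2 * ε) * s + s ^ 2) * n - r)) := by
  have hK : 0 ≤ (1 - ε) * Real.exp s + ε * Real.exp (-s) := by
    have := sub_nonneg.2 hε1
    positivity
  refine annealed_le_of_ae hP 0 (measurableSet_traj n {y | r ≤ s * dot _ y}) ?_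
  filter_upwards [hmass] with ω hω
  refine (quenched_exp_tail_le hP ω _ s r hK (fun y => ?_) n).trans (ENNReal.ofReal_le_ofReal ?_)
  · refine (sum_pmf_mul_le ω y _ (Wp := Real.exp s) (Wn := Real.exp (-s)) (fun i => ?_)
      (fun i => ?_)).trans_eq (by rw [hω y]; ring) <;> simp [dot_dirVec]
  · calc Real.exp (-r) * ((1 - ε) * Real.exp s + ε * Real.exp (-s)) ^ n
        ≤ Real.exp (-r) * Real.exp ((1 - 2 * ε) * s + s ^ 2) ^ n := by
          gcongr; exact two_point_mgf_le hε0 hε1 hs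
      _ = _ := by rw [← Real.exp_nat_mul, ← Real.exp_add]; ring_nf

lemma annealed_level_deviation_le (hP : IsQuenched P) [IsProbabilityMeasure Pr]
    (hmass : ∀ᵐ ω ∂Pr, ∀ x, forwardMass ω x = 1 - ε) (hε0 : 0 ≤ ε) (hε1 : ε ≤ 1) {δ : ℝ}
    (hδ0 : 0 < δ) (hδ1 : δ ≤ 1) (n : ℕ) :
    annealed P Pr 0 {X | δ * n ≤ |dot (fun _ => (1 : ℝ)) (X n) - (1 - 2 * ε) * n|}
      ≤ ENNReal.ofReal (2 * Real.exp (-(δ ^ 2 / 4)) ^ n) := by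
  set m := 1 - 2 * ε
  have hs : |δ / 2| ≤ 1 := by rw [abs_of_pos (by positivity)]; linarith
  have hup := annealed_level_tail_le hP hmass hε0 hε1 hs (δ / 2 * ((m + δ) * n)) n
  have hdown := annealed_level_tail_le hP hmass hε0 hε1 (by rwa [abs_neg])
    (-(δ / 2) * ((m - δ) * n)) n
  have hexp (s r : ℝ) (hsr : ((m * s + s ^ 2) * n - r) = -(δ ^ 2 / 4) * n) :
      Real.exp ((m * s + s ^ 2) * n - r) = Real.exp (-(δ ^ 2 / 4)) ^ n := by
    rw [hsr, mul_comm, Real.exp_nat_mul]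
  rw [hexp _ _ (by ring)] at hup hdown
  calc _ ≤ annealed P Pr 0 ({X | δ / 2 * ((m + δ) * n) ≤ δ / 2 * dot (fun _ => (1 : ℝ)) (X n)} ∪
          {X | -(δ / 2) * ((m - δ) * n) ≤ -(δ / 2) * dot (fun _ => (1 : ℝ)) (X n)}) := by
        refine measure_mono fun X (hX : δ * n ≤ |_ - m * n|) => ?_
        rcases le_abs'.1 hX with h | h
        · right; simp only [Set.mem_ofPred_eq]; nlinarith
        · left; simp only [Set.mem_ofPred_eq]; nlinarith
    _ ≤ _ := (measure_union_le _ _).trans (add_le_add hup hdown)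
    _ = _ := by rw [← ENNReal.ofReal_add (by positivity) (by positivity), two_mul]

lemma ae_tendsto_level_div (hP : IsQuenched P) [IsProbabilityMeasure Pr]
    (hmass : ∀ᵐ ω ∂Pr, ∀ x, forwardMass ω x = 1 - ε) (hε0 : 0 ≤ ε) (hε1 : ε ≤ 1) :
    ∀ᵐ X ∂(annealed P Pr 0),
      Tendsto (fun n : ℕ => dot (fun _ => (1 : ℝ)) (X n) / n) atTop (𝓝 (1 - 2 * ε)) := by
  refine ae_tendsto_div_of_summable_deviation fun δ hδ => ?_
  set δ' := min δ 1
  have hδ' : 0 < δ' := lt_min hδ one_pos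
  set ρ := Real.exp (-(δ' ^ 2 / 4))
  have hρ : ρ < 1 := Real.exp_lt_one_iff.2 (by nlinarith)
  have hsum : Summable fun n : ℕ => 2 * ρ ^ n :=
    (summable_geometric_of_lt_one (Real.exp_nonneg _) hρ).mul_left 2
  refine ne_top_of_le_ne_top (ENNReal.ofReal_ne_top (r := ∑' n : ℕ, 2 * ρ ^ n)) ?_
  rw [ENNReal.ofReal_tsum_of_nonneg (fun n => by positivity) hsum]
  refine ENNReal.tsum_le_tsum fun n => (measure_mono fun X (hX : δ * n ≤ _) => ?_).trans
    (annealed_level_deviation_le hP hmass hε0 hε1 hδ' (min_le_right δ 1) n)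
  exact (mul_le_mul_of_nonneg_right (min_le_left δ 1) (Nat.cast_nonneg n)).trans hX

lemma transient_of_ae_tendsto_div (hP : IsQuenched P) [IsProbabilityMeasure Pr]
    {ℓ : Fin d → ℝ} {v : ℝ} (hv : 0 < v)
    (h : ∀ᵐ X ∂(annealed P Pr 0), Tendsto (fun n : ℕ => dot ℓ (X n) / n) atTop (𝓝 v)) :
    Transient P Pr ℓ := by
  have := isProbabilityMeasure_annealed (Pr := Pr) hP 0
  refine (measure_of_measure_compl_eq_zero (ae_iff.1 ?_)).trans measure_univ
  filter_upwards [h] with X hX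
  have hlin : Tendsto (fun n : ℕ => dot ℓ (X n) / n * n) atTop atTop :=
    hX.pos_mul_atTop hv tendsto_natCast_atTop_atTop
  refine hlin.congr' ((eventually_ne_atTop 0).mono fun n hn => ?_)
  exact div_mul_cancel₀ _ (Nat.cast_ne_zero.2 hn)

end Level

lemma mul_exp_mul_log_le_pow_floor_add_one {x t : ℝ} (hx0 : 0 < x) (hx1 : x ≤ 1) (ht : 0 ≤ t) :
    x * Real.exp (t * Real.log x) ≤ x ^ (⌊t⌋₊ + 1) :=
  calc x * Real.exp (t * Real.log x) = Real.exp ((t + 1) * Real.log x) := by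
        rw [add_mul, one_mul, Real.exp_add, Real.exp_log hx0, mul_comm]
    _ ≤ Real.exp ((⌊t⌋₊ + 1 : ℕ) * Real.log x) :=
        Real.exp_le_exp.2 (mul_le_mul_of_nonpos_right (by push_cast; linarith [Nat.floor_le ht])
          (Real.log_nonpos hx0.le hx1))
    _ = x ^ (⌊t⌋₊ + 1) := by rw [Real.exp_nat_mul, Real.exp_log hx0]

/-- The lower bound is needed because `Real.log 0 = 0`: it keeps `g` positive and the `limsup`
bounded below. -/
lemma limsup_inv_mul_log_neg {g : ℝ → ℝ} {a α b β : ℝ} (ha : 0 < a) (hβ : 0 < β)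
    (hg : ∀ᶠ L in atTop, a * Real.exp (α * L) ≤ g L ∧ g L ≤ b * Real.exp (-(β * L))) :
    limsup (fun L => L⁻¹ * Real.log (g L)) atTop < 0 := by
  have hvan (C : ℝ) : Tendsto (fun L : ℝ => L⁻¹ * C) atTop (𝓝 0) := by
    simpa using tendsto_inv_atTop_zero.mul_const C
  have hbounds : ∀ᶠ L in atTop, α + L⁻¹ * Real.log a ≤ L⁻¹ * Real.log (g L) ∧
      L⁻¹ * Real.log (g L) ≤ -β + L⁻¹ * Real.log b := by
    filter_upwards [hg, eventually_gt_atTop 0] with L ⟨hlo, hhi⟩ hL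
    have hlo0 : 0 < a * Real.exp (α * L) := by positivity
    have hb : 0 < b := pos_of_mul_pos_left (hlo0.trans_le (hlo.trans hhi)) (Real.exp_pos _).le
    have h₁ := Real.log_le_log hlo0 hlo
    have h₂ := Real.log_le_log (hlo0.trans_le hlo) hhi
    rw [Real.log_mul ha.ne' (Real.exp_pos _).ne', Real.log_exp] at h₁
    rw [Real.log_mul hb.ne' (Real.exp_pos _).ne', Real.log_exp] at h₂
    have hinv := inv_nonneg.2 hL.le
    constructor
    · calc α + L⁻¹ * Real.log a = L⁻¹ * (Real.log a + α * L) := by field_simp; ring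
        _ ≤ _ := mul_le_mul_of_nonneg_left h₁ hinv
    · calc L⁻¹ * Real.log (g L) ≤ L⁻¹ * (Real.log b + -(β * L)) :=
            mul_le_mul_of_nonneg_left h₂ hinv
        _ = -β + L⁻¹ * Real.log b := by field_simp; ring
  refine (limsup_le_of_le ?_ ?_).trans_lt (neg_lt_zero.2 (half_pos hβ))
  · refine isCoboundedUnder_le_of_eventually_le atTop (x := α - 1) ?_
    filter_upwards [hbounds, (hvan (Real.log a)).eventually (eventually_gt_nhds neg_one_lt_zero)]
      with L h hsmall
    linarith [h.1]
  · filter_upwards [hbounds, (hvan (Real.log b)).eventually (eventually_lt_nhds (half_pos hβ))]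
      with L h hsmall
    linarith [h.2]

section CondT

variable {d : ℕ} {P : Env d → V d → Measure (Traj d)} {Pr : Measure (Env d)} {ε : ℝ}

def slabBackExit (ℓ' : Fin d → ℝ) (b L : ℝ) : Set (Traj d) :=
  {X | ∃ n, X n ∉ slab ℓ' b L ∧ (∀ m < n, X m ∈ slab ℓ' b L) ∧ dot ℓ' (X n) < 0}

lemma slabBackExit_subset {ℓ' : Fin d → ℝ} {b L : ℝ} (hL : 0 ≤ L) :
    slabBackExit ℓ' b L ⊆ ⋃ n, {X | b * L < -dot ℓ' (X n)} := by
  rintro X ⟨n, hout, -, hneg⟩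
  exact Set.mem_iUnion.2 ⟨n, not_le.1 fun (h : -dot ℓ' (X n) ≤ b * L) =>
    hout ⟨by linarith, by linarith⟩⟩

lemma mem_slabBackExit_of_descent {ℓ' : Fin d → ℝ} {b L : ℝ} (hb : 0 ≤ b) (hL : 0 ≤ L)
    {X : Traj d} {N : ℕ} (h0 : dot ℓ' (X 0) ≤ 0)
    (hdesc : ∀ k < N, dot ℓ' (X (k + 1)) ≤ dot ℓ' (X k)) (hN : dot ℓ' (X N) < -(b * L)) :
    X ∈ slabBackExit ℓ' b L := by
  have hex : ∃ n, dot ℓ' (X n) < -(b * L) := ⟨N, hN⟩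
  have hle : ∀ k ≤ N, dot ℓ' (X k) ≤ 0 := by
    intro k
    induction k with
    | zero => exact fun _ => h0
    | succ k ih => exact fun hk => (hdesc k hk).trans (ih (Nat.le_of_succ_le hk))
  have hbL : 0 ≤ b * L := mul_nonneg hb hL
  refine ⟨Nat.find hex, fun h => not_le.2 (Nat.find_spec hex) h.1, fun m hm => ⟨?_, ?_⟩, ?_⟩
  · exact not_lt.1 (Nat.find_min hex hm)
  · exact (hle m (hm.trans_le (Nat.find_min' hex hN)).le).trans hL
  · linarith [Nat.find_spec hex]

/-- Witness: the path that always takes a backward step of probability at least `ε / d`; each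
such step lowers `X · ℓ'` by at least `κ`. -/
lemma le_quenched_slabBackExit (hP : IsQuenched P) (hd : 0 < d) {ω : Env d}
    (hmass : ∀ x, forwardMass ω x ≤ 1 - ε) (hε : 0 ≤ ε) {ℓ' : Fin d → ℝ} {κ : ℝ}
    (hκ : ∀ i, κ ≤ ℓ' i) {b L : ℝ} (hb : 0 ≤ b) (hL : 0 ≤ L) {N : ℕ} (hN : b * L < N * κ) :
    ENNReal.ofReal ((ε / d) ^ N) ≤ P ω 0 (slabBackExit ℓ' b L) := by
  have hκ0 : 0 < κ := pos_of_mul_pos_right ((mul_nonneg hb hL).trans_lt hN) (Nat.cast_nonneg N)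
  choose back hback using exists_pmf_backward_ge hd ω
  let y : ℕ → V d := fun k => Nat.rec 0 (fun _ z => z + dirVec d (back z, false)) k
  let es : Fin N → Dir d := fun k => (back (y k), false)
  have hpos : ∀ k ≤ N, posAt 0 es k = y k := by
    intro k
    induction k with
    | zero => exact fun _ => posAt_zero 0 es
    | succ k ih => exact fun hk => by rw [posAt_succ 0 es k hk, ih (Nat.le_of_succ_le hk)]
  have hstep (k : ℕ) : dot ℓ' (y (k + 1)) ≤ dot ℓ' (y k) - κ := by
    change dot ℓ' (y k + dirVec d (back (y k), false)) ≤ _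
    simp only [dot_add, dot_dirVec, Bool.false_eq_true, if_false]
    linarith [hκ (back (y k))]
  have hdrop (k : ℕ) : dot ℓ' (y k) ≤ -(k * κ) := by
    induction k with
    | zero => simp [y]
    | succ k ih => push_cast; linarith [hstep k]
  have hprob : (ε / d) ^ N ≤ pathProb ω 0 es := by
    rw [pathProb, ← Fin.prod_const]
    refine Finset.prod_le_prod (fun _ _ => by positivity) fun k _ => ?_
    rw [hpos k k.isLt.le]
    exact (div_le_div_of_nonneg_right (by linarith [hmass (y k)]) (Nat.cast_nonneg d)).trans
      (hback (y k))
  calc ENNReal.ofReal ((ε / d) ^ N) ≤ P ω 0 (cyl 0 es) := by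
        rw [quenched_cyl hP]; exact ENNReal.ofReal_le_ofReal hprob
    _ ≤ P ω 0 (slabBackExit ℓ' b L) := measure_mono fun X hX => by
        have hXy : ∀ k ≤ N, X k = y k := fun k hk => (hX k hk).trans (hpos k hk)
        refine mem_slabBackExit_of_descent hb hL (N := N) ?_ (fun k hk => ?_) ?_
        · rw [hXy 0 (Nat.zero_le N)]; simp [y]
        · rw [hXy k hk.le, hXy (k + 1) hk]; linarith [hstep k]
        · rw [hXy N le_rfl]; linarith [hdrop N]

lemma sum_pmf_mul_exp_le {ω : Env d} {y : V d} (hmass : forwardMass ω y = 1 - ε) (hε0 : 0 ≤ ε)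
    (hε5 : ε < 1 / 5) {c : ℝ} (hc0 : 0 < c) (hc1 : c ≤ 1) {ℓ' : Fin d → ℝ}
    (hℓ : ∀ i, ℓ' i ∈ Set.Icc (c / 2) (3 * c / 2)) :
    ∑ e, pmf ω y e * Real.exp (-(1 / 100) * dot ℓ' (dirVec d e)) ≤ 1 - c / 2000 := by
  refine (sum_pmf_mul_le ω y _ (Wp := Real.exp (-(c / 200))) (Wn := Real.exp (3 * c / 200))
    (fun i => ?_) (fun i => ?_)).trans ?_
  · simp only [dot_dirVec, if_true, Real.exp_le_exp]; linarith [(hℓ i).1]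
  · simp only [dot_dirVec, Bool.false_eq_true, if_false, Real.exp_le_exp]; linarith [(hℓ i).2]
  have h₁ := (abs_le.1 (Real.abs_exp_sub_one_sub_id_le (x := -(c / 200))
    (by rw [abs_neg, abs_of_pos (by positivity)]; linarith))).2
  have h₂ := (abs_le.1 (Real.abs_exp_sub_one_sub_id_le (x := 3 * c / 200)
    (by rw [abs_of_pos (by positivity)]; linarith))).2
  rw [hmass]
  nlinarith [mul_le_mul_of_nonneg_left h₁ (by linarith : (0 : ℝ) ≤ 1 - ε),
    mul_le_mul_of_nonneg_left h₂ hε0, mul_le_mul_of_nonneg_right hε5.le (mul_pos hc0 hc0).le,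
    mul_le_mul_of_nonneg_left hc1 hc0.le]

lemma annealed_slabBackExit_le (hP : IsQuenched P) [IsProbabilityMeasure Pr]
    (hmass : ∀ᵐ ω ∂Pr, ∀ x, forwardMass ω x = 1 - ε) (hε0 : 0 ≤ ε) (hε5 : ε < 1 / 5) {c : ℝ}
    (hc0 : 0 < c) (hc1 : c ≤ 1) {ℓ' : Fin d → ℝ} (hℓ : ∀ i, ℓ' i ∈ Set.Icc (c / 2) (3 * c / 2))
    {b L : ℝ} (hL : 0 ≤ L) :
    annealed P Pr 0 (slabBackExit ℓ' b L)
      ≤ ENNReal.ofReal (2000 / c * Real.exp (-(b / 100 * L))) := by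
  have hρ0 : 0 ≤ 1 - c / 2000 := by linarith
  have hρ1 : 1 - c / 2000 < 1 := by linarith
  set ρ := 1 - c / 2000
  have hn (n : ℕ) : annealed P Pr 0 {X | b / 100 * L ≤ -(1 / 100) * dot ℓ' (X n)}
      ≤ ENNReal.ofReal (Real.exp (-(b / 100 * L)) * ρ ^ n) := by
    refine annealed_le_of_ae hP 0
      (measurableSet_traj n {y | b / 100 * L ≤ -(1 / 100) * dot ℓ' y}) ?_
    filter_upwards [hmass] with ω hω
    exact quenched_exp_tail_le hP ω ℓ' _ _ hρ0
      (fun y => sum_pmf_mul_exp_le (hω y) hε0 hε5 hc0 hc1 hℓ) n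
  have hsum : Summable fun n : ℕ => Real.exp (-(b / 100 * L)) * ρ ^ n :=
    (summable_geometric_of_lt_one hρ0 hρ1).mul_left _
  calc annealed P Pr 0 (slabBackExit ℓ' b L)
      ≤ ∑' n, annealed P Pr 0 {X | b / 100 * L ≤ -(1 / 100) * dot ℓ' (X n)} :=
        (measure_mono ((slabBackExit_subset hL).trans (Set.iUnion_mono fun n X hX => by
          simp only [Set.mem_ofPred_eq] at hX ⊢; linarith))).trans (measure_iUnion_le _)
    _ ≤ ∑' n : ℕ, ENNReal.ofReal (Real.exp (-(b / 100 * L)) * ρ ^ n) := ENNReal.tsum_le_tsum hn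
    _ = ENNReal.ofReal (2000 / c * Real.exp (-(b / 100 * L))) := by
        rw [← ENNReal.ofReal_tsum_of_nonneg (fun n => by positivity) hsum, tsum_mul_left,
          tsum_geometric_of_lt_one hρ0 hρ1]
        congr 1
        rw [show 1 - ρ = c / 2000 by ring]
        field_simp

lemma condT_of_ae_forwardMass (hP : IsQuenched P) [IsProbabilityMeasure Pr] (hd : 0 < d)
    (hmass : ∀ᵐ ω ∂Pr, ∀ x, forwardMass ω x = 1 - ε) (hε0 : 0 < ε) (hε5 : ε < 1 / 5) :
    CondT P Pr (fun _ => (Real.sqrt d)⁻¹) := by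
  set c := (Real.sqrt d)⁻¹
  have hd1 : (1 : ℝ) ≤ d := by exact_mod_cast hd
  have hc0 : 0 < c := by positivity
  have hc1 : c ≤ 1 := inv_le_one_of_one_le₀ (Real.one_le_sqrt.2 hd1)
  refine ⟨(c / 2) ^ 2, by positivity, 1, one_pos, fun ℓ' _ hnear => ?_⟩
  have hℓ (i : Fin d) : ℓ' i ∈ Set.Icc (c / 2) (3 * c / 2) := by
    have hi : (ℓ' i - c) ^ 2 < (c / 2) ^ 2 :=
      (Finset.single_le_sum (fun j _ => sq_nonneg (ℓ' j - c)) (Finset.mem_univ i)).trans_lt hnear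
    have := abs_lt.1 (abs_lt_of_sq_lt_sq hi (by positivity))
    constructor <;> linarith
  have := isProbabilityMeasure_annealed (Pr := Pr) hP 0
  have hx0 : 0 < ε / d := by positivity
  have hx1 : ε / d ≤ 1 := div_le_one_of_le₀ (by linarith) (by positivity)
  refine limsup_inv_mul_log_neg (g := fun L => (annealed P Pr 0 (slabBackExit ℓ' 1 L)).toReal)
    (α := 2 / c * Real.log (ε / d)) (b := 2000 / c) hx0 (by norm_num : (0 : ℝ) < 1 / 100) ?_
  filter_upwards [eventually_ge_atTop 0] with L hL
  constructor
  · have hN : 1 * L < (⌊2 / c * L⌋₊ + 1 : ℕ) * (c / 2) := by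
      have := Nat.lt_floor_add_one (2 / c * L)
      push_cast
      field_simp at this ⊢
      linarith
    have hlow := le_annealed_of_ae hP 0 (hmass.mono fun ω hω => le_quenched_slabBackExit hP hd
      (fun x => (hω x).le) hε0.le (fun i => (hℓ i).1) zero_le_one hL hN)
    calc ε / d * Real.exp (2 / c * Real.log (ε / d) * L)
        = ε / d * Real.exp (2 / c * L * Real.log (ε / d)) := by ring_nf
      _ ≤ (ε / d) ^ (⌊2 / c * L⌋₊ + 1) :=
        mul_exp_mul_log_le_pow_floor_add_one hx0 hx1 (by positivity)
      _ ≤ _ := (ENNReal.ofReal_le_iff_le_toReal (measure_ne_top _ _)).1 hlow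
  · exact ENNReal.toReal_le_of_le_ofReal (by positivity)
      (annealed_slabBackExit_le hP hmass hε0.le hε5 hc0 hc1 hℓ hL)

end CondT

/-- For the random walk in the environment `𝐏^expl` with
`ε ∈ (1/(2d+1), 1/5)`: a.s. `P^ω_0[X₁·ℓ₀ = 1] = 1 - ε` where `ℓ₀ = e₁ + ⋯ + e_d`;
consequently `X_n·ℓ₀/n → 1-2ε` a.s., the walk is transient in the direction `ℓ₀/|ℓ₀|`, and
condition `(T)` holds in that direction. -/
theorem pexpl_transient_and_condT
    (d : ℕ) (hd : 2 ≤ d)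
    (P : Env d → V d → Measure (Traj d)) (hP : IsQuenched P)
    (Pr : Measure (Env d)) (ε : ℝ) (hPr : IsPexpl Pr ε)
    (hε : 1 / (2 * (d : ℝ) + 1) < ε ∧ ε < 1 / 5) :
    (∀ᵐ ω ∂Pr, ((P ω 0) {X | dot (fun _ => (1 : ℝ)) (X 1) = 1}).toReal = 1 - ε) ∧
    (∀ᵐ X ∂(annealed P Pr 0),
      Tendsto (fun n : ℕ => dot (fun _ => (1 : ℝ)) (X n) / n) atTop (𝓝 (1 - 2 * ε))) ∧
    Transient P Pr (fun _ => (Real.sqrt d)⁻¹) ∧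
    CondT P Pr (fun _ => (Real.sqrt d)⁻¹) := by
  have := hPr.1.1
  have hε0 : 0 < ε := lt_trans (by positivity) hε.1
  have hmass := ae_forwardMass_eq hd hPr
  have hlln := ae_tendsto_level_div hP hmass hε0.le (by linarith)
  have hc : 0 < (Real.sqrt d)⁻¹ := inv_pos.2 (Real.sqrt_pos.2 (by positivity))
  refine ⟨hmass.mono fun ω hω => by rw [quenched_first_step_forward hP, hω 0], hlln, ?_,
    condT_of_ae_forwardMass hP (by omega) hmass hε0 hε.2⟩
  refine transient_of_ae_tendsto_div hP (mul_pos hc (by linarith : 0 < 1 - 2 * ε)) ?_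
  filter_upwards [hlln] with X hX
  refine (hX.const_mul (Real.sqrt d)⁻¹).congr fun n => ?_
  rw [dot_const (Real.sqrt d)⁻¹, mul_div_assoc]

end RWRE
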